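/- Let (E,π,𝒞) be a weakly left-resolving labelled space and let B be a C*-algebra generated (as a C*-algebra) by a representation {s_a, p_A} of (E,π,𝒞) which admits a gauge action γ. Then the fixed-point algebra B^γ = {b ∈ B : γ_z(b) = b for all z ∈ 𝕋} equals the closed linear span of {p_A : A ∈ 𝒞} ∪ {s_α p_A s_β* : n ≥ 1, α, β ∈ ℒⁿ(E,π), A ∈ 𝒞, A ⊆ r(α) ∩ r(β)}. -/

import Mathlib

/-- A labelled graph: a directed graph with vertex type `V`, edge type `E`,
source and range maps, together with a labelling of the edges by the alphabet `A`. -/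
structure LabelledGraph (V : Type*) (E : Type*) (A : Type*) where
  src : E → V
  rng : E → V
  lbl : E → A

namespace LabelledGraph

variable {V E A : Type*}

/-- A path is a nonempty list of edges such that the range of each edge is the
source of the next one. -/
def IsPath (G : LabelledGraph V E A) (l : List E) : Prop :=
  l ≠ [] ∧ l.Chain' (fun e f => G.rng e = G.src f)

/-- The language `ℒ(E,π)`: all (nonempty) words over `A` represented by some path. -/
def language (G : LabelledGraph V E A) : Set (List A) :=
  { α | ∃ l, G.IsPath l ∧ l.map G.lbl = α }

/-- `s(α)`: sources of paths representing the word `α`. -/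
def srcSet (G : LabelledGraph V E A) (α : List A) : Set V :=
  { v | ∃ l, ∃ h : G.IsPath l, l.map G.lbl = α ∧ G.src (l.head h.1) = v }

/-- `r(α)`: ranges of paths representing the word `α`. -/
def rngSet (G : LabelledGraph V E A) (α : List A) : Set V :=
  { v | ∃ l, ∃ h : G.IsPath l, l.map G.lbl = α ∧ G.rng (l.getLast h.1) = v }

/-- `r(S,α)`: the relative range of the word `α` with respect to the set `S` of vertices. -/
def relRng (G : LabelledGraph V E A) (S : Set V) (α : List A) : Set V :=
  { v | ∃ l, ∃ h : G.IsPath l,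
      l.map G.lbl = α ∧ G.src (l.head h.1) ∈ S ∧ G.rng (l.getLast h.1) = v }

/-- A labelled graph is left-resolving if the labelling is injective on the set
of incoming edges of each vertex. -/
def LeftResolving (G : LabelledGraph V E A) : Prop :=
  ∀ v : V, Set.InjOn G.lbl { e | G.rng e = v }

/-- A sink is a vertex emitting no edges. -/
def IsSink (G : LabelledGraph V E A) (v : V) : Prop := ∀ e : E, G.src e ≠ v

/-- A source is a vertex receiving no edges. -/
def IsSource (G : LabelledGraph V E A) (v : V) : Prop := ∀ e : E, G.rng e ≠ v

/-- `L¹_S`: the letters `a` (labelled paths of length one) with `S ∩ s(a) ≠ ∅`. -/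
def L1 (G : LabelledGraph V E A) (S : Set V) : Set A :=
  { a | (S ∩ G.srcSet [a]).Nonempty }

/-- `Lⁿ_S`: the words of length `n` whose source set meets `S`. -/
def Ln (G : LabelledGraph V E A) (S : Set V) (n : ℕ) : Set (List A) :=
  { α | α.length = n ∧ (S ∩ G.srcSet α).Nonempty }

/-- A collection `C` of subsets of vertices is accommodating for `G` if it contains all
ranges `r(α)`, is closed under relative ranges, and under finite intersections and unions. -/
structure Accommodating (G : LabelledGraph V E A) (C : Set (Set V)) : Prop where
  rng_mem : ∀ α ∈ G.language, G.rngSet α ∈ C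
  relRng_mem : ∀ S ∈ C, ∀ α ∈ G.language, G.relRng S α ∈ C
  inter_mem : ∀ S ∈ C, ∀ T ∈ C, S ∩ T ∈ C
  union_mem : ∀ S ∈ C, ∀ T ∈ C, S ∪ T ∈ C

/-- The labelled space `(E,π,C)` is weakly left-resolving. -/
def WeaklyLeftResolving (G : LabelledGraph V E A) (C : Set (Set V)) : Prop :=
  ∀ S ∈ C, ∀ T ∈ C, ∀ α ∈ G.language,
    G.relRng S α ∩ G.relRng T α = G.relRng (S ∩ T) α

/-- The labelled space `(E,π,C)` is set-finite. -/
def SetFinite (G : LabelledGraph V E A) (C : Set (Set V)) : Prop :=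
  ∀ S ∈ C, (G.L1 S).Finite

/-- The collection `ℰ`. -/
def calE (G : LabelledGraph V E A) : Set (Set V) :=
  { S | ∃ v, (G.IsSource v ∨ G.IsSink v) ∧ S = {v} } ∪
    (G.rngSet '' G.language) ∪ (G.srcSet '' G.language)

/-- The collection `ℰ₋`. -/
def calEminus (G : LabelledGraph V E A) : Set (Set V) :=
  { S | ∃ v, G.IsSink v ∧ S = {v} } ∪ (G.rngSet '' G.language)

/-- `ℰ⁰`: the smallest accommodating collection containing `ℰ`. -/
def E0 (G : LabelledGraph V E A) : Set (Set V) :=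
  ⋂₀ { C | G.calE ⊆ C ∧ G.Accommodating C }

/-- `ℰ⁰₋`: the smallest accommodating collection containing `ℰ₋`. -/
def E0minus (G : LabelledGraph V E A) : Set (Set V) :=
  ⋂₀ { C | G.calEminus ⊆ C ∧ G.Accommodating C }

/-- The dual labelled graph `(Ê,π̂)`: vertices are edges of `G`, edges are paths of
length two, labelled by the corresponding words of length two. -/
def dual (G : LabelledGraph V E A) :
    LabelledGraph E { ef : E × E // G.rng ef.1 = G.src ef.2 } (List A) where
  src ef := ef.1.1
  rng ef := ef.1.2
  lbl ef := [G.lbl ef.1.1, G.lbl ef.1.2]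

end LabelledGraph

/-- The product `s_{a₁} ⋯ s_{aₙ}` associated to a word `a₁⋯aₙ` (with junk value `0` on
the empty word). -/
def sWord {A B : Type*} [Mul B] [Zero B] (s : A → B) : List A → B
  | [] => 0
  | [a] => s a
  | a :: b :: l => s a * sWord s (b :: l)

namespace LabelledGraph

/-- A representation of the labelled space `(G, C)` in a C*-algebra `B`: a family of
projections `p S` for `S ∈ C` and partial isometries `s a` for `a ∈ ℒ¹` satisfying the
relations (i)-(iv). -/
structure IsRepresentation {V E A : Type*} (G : LabelledGraph V E A) (C : Set (Set V))
    {B : Type*} [NonUnitalRing B] [StarRing B] (p : Set V → B) (s : A → B) : Prop where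
  p_star : ∀ S ∈ C, star (p S) = p S
  p_idem : ∀ S ∈ C, p S * p S = p S
  s_partialIsometry : ∀ a, [a] ∈ G.language → s a * star (s a) * s a = s a
  p_empty : p ∅ = 0
  p_inter : ∀ S ∈ C, ∀ T ∈ C, p S * p T = p (S ∩ T)
  p_union : ∀ S ∈ C, ∀ T ∈ C, p (S ∪ T) = p S + p T - p (S ∩ T)
  p_mul_s : ∀ S ∈ C, ∀ a, [a] ∈ G.language → p S * s a = s a * p (G.relRng S [a])
  star_s_mul_s : ∀ a, [a] ∈ G.language → star (s a) * s a = p (G.rngSet [a])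
  s_orth : ∀ a b, [a] ∈ G.language → [b] ∈ G.language → a ≠ b → star (s a) * s b = 0
  cuntz_krieger : ∀ S ∈ C, ∀ hfin : (G.L1 S).Finite, (G.L1 S).Nonempty →
    p S = ∑ a ∈ hfin.toFinset, s a * p (G.relRng S [a]) * star (s a)

end LabelledGraph

/-- The C*-subalgebra of `B` generated by a set, as a subset of `B`: the closure of the
non-unital star subalgebra generated by the set. -/
def genCStar (B : Type*) [NonUnitalCStarAlgebra B] (gens : Set B) : Set B :=
  closure (NonUnitalStarAlgebra.adjoin ℂ gens : Set B)

/-- An action of the circle group `𝕋` by *-automorphisms on `B`, strongly continuous. -/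
structure CircleAction (B : Type*) [NonUnitalCStarAlgebra B] where
  act : Circle → B → B
  act_one : act 1 = id
  act_mul : ∀ z w, act (z * w) = act z ∘ act w
  act_bijective : ∀ z, Function.Bijective (act z)
  map_add : ∀ z x y, act z (x + y) = act z x + act z y
  map_mul : ∀ z x y, act z (x * y) = act z x * act z y
  map_smul : ∀ z (c : ℂ) x, act z (c • x) = c • act z x
  map_star : ∀ z x, act z (star x) = star (act z x)
  continuous : ∀ x, Continuous fun z => act z x

/-- A gauge action for a representation `{s_a, p_A}`: the circle action fixes the
projections and scales the partial isometries. -/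
def IsGaugeAction {V E A : Type*} (G : LabelledGraph V E A) (C : Set (Set V))
    {B : Type*} [NonUnitalCStarAlgebra B] (p : Set V → B) (s : A → B)
    (γ : CircleAction B) : Prop :=
  (∀ z a, [a] ∈ G.language → γ.act z (s a) = (z : ℂ) • s a) ∧
  (∀ z, ∀ S ∈ C, γ.act z (p S) = p S)

/-- A Cuntz–Krieger family for the directed graph underlying `G`. -/
structure IsCKFamily {V E A : Type*} (G : LabelledGraph V E A)
    {B : Type*} [NonUnitalRing B] [StarRing B] (p : V → B) (s : E → B) : Prop where
  p_star : ∀ v, star (p v) = p v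
  p_idem : ∀ v, p v * p v = p v
  p_orth : ∀ v w, v ≠ w → p v * p w = 0
  star_s_mul_s : ∀ e, star (s e) * s e = p (G.rng e)
  s_orth : ∀ e f, e ≠ f → star (s e) * s f = 0
  cuntz_krieger : ∀ v, (∃ e, G.src e = v) → ∀ hfin : {e | G.src e = v}.Finite,
    p v = ∑ e ∈ hfin.toFinset, s e * star (s e)


namespace LabelledGraph

variable {V E A : Type*} {G : LabelledGraph V E A}

lemma isPath_singleton (e : E) : G.IsPath [e] := ⟨by simp, List.isChain_singleton _⟩

lemma lang_ne_nil {α : List A} (h : α ∈ G.language) : α ≠ [] := by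
  obtain ⟨l, hl, hmap⟩ := h
  intro h0
  rw [h0, List.map_eq_nil_iff] at hmap
  exact hl.1 hmap

lemma lang_single_of_cons {a : A} {α : List A} (h : (a :: α) ∈ G.language) :
    [a] ∈ G.language := by
  obtain ⟨l, hl, hmap⟩ := h
  cases l with
  | nil => simp at hmap
  | cons e l' =>
    simp only [List.map_cons, List.cons.injEq] at hmap
    exact ⟨[e], isPath_singleton e, by simp [hmap.1]⟩

lemma lang_tail_of_cons {a : A} {α : List A} (hne : α ≠ []) (h : (a :: α) ∈ G.language) :
    α ∈ G.language := by
  obtain ⟨l, hl, hmap⟩ := h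
  cases l with
  | nil => simp at hmap
  | cons e l' =>
    simp only [List.map_cons, List.cons.injEq] at hmap
    have hl' : l' ≠ [] := by
      intro h0; rw [h0] at hmap; exact hne hmap.2.symm
    exact ⟨l', ⟨hl', (List.isChain_cons.mp hl.2).2⟩, hmap.2⟩

lemma lang_of_append_right {α ε : List A} (hε : ε ≠ []) (h : α ++ ε ∈ G.language) :
    ε ∈ G.language := by
  induction α with
  | nil => exact h
  | cons a α ih =>
    exact ih (lang_tail_of_cons (by simp [hε]) h)

lemma relRng_mono {S T : Set V} (h : S ⊆ T) (α : List A) :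
    G.relRng S α ⊆ G.relRng T α := by
  rintro v ⟨l, hl, hmap, hsrc, hrng⟩
  exact ⟨l, hl, hmap, h hsrc, hrng⟩

lemma relRng_subset_rngSet (S : Set V) (α : List A) :
    G.relRng S α ⊆ G.rngSet α := by
  rintro v ⟨l, hl, hmap, _, hrng⟩
  exact ⟨l, hl, hmap, hrng⟩

lemma rngSet_eq_relRng_univ (α : List A) : G.rngSet α = G.relRng Set.univ α := by
  ext v
  constructor
  · rintro ⟨l, hl, hmap, hrng⟩; exact ⟨l, hl, hmap, trivial, hrng⟩
  · rintro ⟨l, hl, hmap, _, hrng⟩; exact ⟨l, hl, hmap, hrng⟩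

lemma relRng_cons {a : A} {α : List A} (hα : α ≠ []) (S : Set V) :
    G.relRng S (a :: α) = G.relRng (G.relRng S [a]) α := by
  ext v
  constructor
  · rintro ⟨l, hl, hmap, hsrc, hrng⟩
    cases l with
    | nil => simp at hmap
    | cons e l' =>
      simp only [List.map_cons, List.cons.injEq] at hmap
      have hl' : l' ≠ [] := by
        intro h0; rw [h0] at hmap; exact hα hmap.2.symm
      have hp' : G.IsPath l' := ⟨hl', (List.isChain_cons.mp hl.2).2⟩
      have hch : G.rng e = G.src (l'.head hl') :=
        (List.isChain_cons.mp hl.2).1 (l'.head hl') (List.head?_eq_head hl')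
      have hlast : (e :: l').getLast hl.1 = l'.getLast hl' := List.getLast_cons hl'
      refine ⟨l', hp', hmap.2, ?_, ?_⟩
      · refine ⟨[e], isPath_singleton e, by simp [hmap.1], ?_, ?_⟩
        · simpa using hsrc
        · simpa using hch
      · rw [← hlast]; exact hrng
  · rintro ⟨l', hp', hmap', hsrc', hrng'⟩
    obtain ⟨m, hm, hmapm, hsrcm, hrngm⟩ := hsrc'
    cases m with
    | nil => simp at hmapm
    | cons e m' =>
      simp only [List.map_cons, List.cons.injEq, List.map_eq_nil_iff] at hmapm
      obtain ⟨hea, rfl⟩ := hmapm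
      have hch : G.rng e = G.src (l'.head hp'.1) := by simpa using hrngm
      have hpath : G.IsPath (e :: l') := by
        refine ⟨by simp, List.isChain_cons.mpr ⟨?_, hp'.2⟩⟩
        intro y hy
        rw [List.head?_eq_head hp'.1, Option.mem_some_iff] at hy
        rw [← hy]; exact hch
      refine ⟨e :: l', hpath, by simp [hea, hmap'], ?_, ?_⟩
      · simpa using hsrcm
      · have hlast : (e :: l').getLast hpath.1 = l'.getLast hp'.1 :=
          List.getLast_cons hp'.1
        rw [hlast]; exact hrng'

lemma rngSet_cons {a : A} {α : List A} (hα : α ≠ []) :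
    G.rngSet (a :: α) = G.relRng (G.rngSet [a]) α := by
  rw [rngSet_eq_relRng_univ, relRng_cons hα, ← rngSet_eq_relRng_univ]

lemma mem_relRng_concat {α ε : List A} {v : V} (hv : v ∈ G.relRng (G.rngSet α) ε) :
    (α ++ ε) ∈ G.language ∧ v ∈ G.rngSet (α ++ ε) := by
  obtain ⟨l, hl, hmapl, hsrc, hrng⟩ := hv
  obtain ⟨m, hm, hmapm, hrngm⟩ := hsrc
  have hpath : G.IsPath (m ++ l) := by
    refine ⟨by simp [hm.1], List.isChain_append.mpr ⟨hm.2, hl.2, ?_⟩⟩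
    intro x hx y hy
    rw [List.getLast?_eq_getLast (l := m) hm.1, Option.mem_some_iff] at hx
    rw [List.head?_eq_head hl.1, Option.mem_some_iff] at hy
    rw [← hx, ← hy]; exact hrngm
  have hmap : (m ++ l).map G.lbl = α ++ ε := by simp [hmapm, hmapl]
  refine ⟨⟨m ++ l, hpath, hmap⟩, ⟨m ++ l, hpath, hmap, ?_⟩⟩
  have : (m ++ l).getLast hpath.1 = l.getLast hl.1 := List.getLast_append_of_ne_nil _ hl.1
  rw [this]; exact hrng

end LabelledGraph
section RepLemmas

open LabelledGraph

variable {V E A : Type*} {B : Type*} [NonUnitalCStarAlgebra B]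
variable {G : LabelledGraph V E A} {C : Set (Set V)} {p : Set V → B} {s : A → B}

/-- The word map into the unitization, with `W [] = 1`. -/
noncomputable def Wrd (s : A → B) : List A → Unitization ℂ B
  | [] => 1
  | a :: l => (s a : Unitization ℂ B) * Wrd s l

@[simp] lemma Wrd_nil : Wrd s ([] : List A) = 1 := rfl

lemma Wrd_cons (a : A) (l : List A) : Wrd s (a :: l) = (s a : Unitization ℂ B) * Wrd s l := rfl

lemma Wrd_append (α β : List A) : Wrd s (α ++ β) = Wrd s α * Wrd s β := by
  induction α with
  | nil => simp
  | cons a l ih => simp [Wrd_cons, ih, mul_assoc]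

lemma coe_sWord {α : List A} (hα : α ≠ []) :
    ((sWord s α : B) : Unitization ℂ B) = Wrd s α := by
  induction α with
  | nil => exact absurd rfl hα
  | cons a l ih =>
    cases l with
    | nil => simp [sWord, Wrd_cons]
    | cons b m =>
      rw [show sWord s (a :: b :: m) = s a * sWord s (b :: m) from rfl,
        Unitization.inr_mul, ih (by simp)]
      rfl

variable (hrep : G.IsRepresentation C p s) (hC : G.Accommodating C)
include hrep

lemma coe_p_inter {S T : Set V} (hS : S ∈ C) (hT : T ∈ C) :
    ((p S : B) : Unitization ℂ B) * ↑(p T) = ↑(p (S ∩ T)) := by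
  rw [← Unitization.inr_mul, hrep.p_inter S hS T hT]

lemma s_mul_p_rng {a : A} (ha : [a] ∈ G.language) :
    s a * p (G.rngSet [a]) = s a := by
  rw [← hrep.star_s_mul_s a ha, ← mul_assoc, hrep.s_partialIsometry a ha]

include hC

lemma p_mul_Wrd : ∀ (α : List A), α ∈ G.language → ∀ (S : Set V), S ∈ C →
    ((p S : B) : Unitization ℂ B) * Wrd s α = Wrd s α * ↑(p (G.relRng S α)) := by
  intro α
  induction α with
  | nil => intro h; exact absurd rfl (lang_ne_nil h)
  | cons a l ih =>
    intro hlang S hS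
    have ha : [a] ∈ G.language := lang_single_of_cons hlang
    cases l with
    | nil =>
      simp only [Wrd_cons, Wrd_nil, mul_one, ← Unitization.inr_mul]
      rw [hrep.p_mul_s S hS a ha]
    | cons b m =>
      have hl : (b :: m) ∈ G.language := lang_tail_of_cons (by simp) hlang
      have h1 : ((p S : B) : Unitization ℂ B) * ↑(s a) = ↑(s a) * ↑(p (G.relRng S [a])) := by
        rw [← Unitization.inr_mul, ← Unitization.inr_mul, hrep.p_mul_s S hS a ha]
      calc ((p S : B) : Unitization ℂ B) * Wrd s (a :: b :: m)
          = (↑(p S) * ↑(s a)) * Wrd s (b :: m) := by rw [Wrd_cons, mul_assoc]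
        _ = ↑(s a) * (↑(p (G.relRng S [a])) * Wrd s (b :: m)) := by rw [h1, mul_assoc]
        _ = ↑(s a) * (Wrd s (b :: m) * ↑(p (G.relRng (G.relRng S [a]) (b :: m)))) := by
            rw [ih hl _ (hC.relRng_mem S hS [a] ha)]
        _ = Wrd s (a :: b :: m) * ↑(p (G.relRng S (a :: b :: m))) := by
            rw [relRng_cons (show (b :: m) ≠ [] by simp) S]; simp only [Wrd_cons, mul_assoc]

lemma starWrd_mul_Wrd : ∀ (α : List A), α ∈ G.language →
    star (Wrd s α) * Wrd s α = ((p (G.rngSet α) : B) : Unitization ℂ B) := by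
  intro α
  induction α with
  | nil => intro h; exact absurd rfl (lang_ne_nil h)
  | cons a l ih =>
    intro hlang
    have ha : [a] ∈ G.language := lang_single_of_cons hlang
    have hss : ((star (s a) : B) : Unitization ℂ B) * ↑(s a) = ↑(p (G.rngSet [a])) := by
      rw [← Unitization.inr_mul, hrep.star_s_mul_s a ha]
    cases l with
    | nil =>
      simp only [Wrd_cons, Wrd_nil, mul_one, ← Unitization.inr_star]
      exact hss
    | cons b m =>
      have hl : (b :: m) ∈ G.language := lang_tail_of_cons (by simp) hlang
      have hmemC : G.relRng (G.rngSet [a]) (b :: m) ∈ C :=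
        hC.relRng_mem _ (hC.rng_mem [a] ha) _ hl
      calc star (Wrd s (a :: b :: m)) * Wrd s (a :: b :: m)
          = star (Wrd s (b :: m)) * ((↑(star (s a)) : Unitization ℂ B) * ↑(s a)
              * Wrd s (b :: m)) := by
            rw [Wrd_cons, star_mul, Unitization.inr_star]
            simp only [mul_assoc]
        _ = star (Wrd s (b :: m)) * (↑(p (G.rngSet [a])) * Wrd s (b :: m)) := by rw [hss]
        _ = star (Wrd s (b :: m)) * (Wrd s (b :: m)
              * ↑(p (G.relRng (G.rngSet [a]) (b :: m)))) := by
            rw [p_mul_Wrd hrep hC _ hl _ (hC.rng_mem [a] ha)]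
        _ = ↑(p (G.rngSet (b :: m))) * ↑(p (G.relRng (G.rngSet [a]) (b :: m))) := by
            rw [← mul_assoc, ih hl]
        _ = ↑(p (G.rngSet (b :: m) ∩ G.relRng (G.rngSet [a]) (b :: m))) := by
            rw [coe_p_inter hrep (hC.rng_mem _ hl) hmemC]
        _ = ↑(p (G.rngSet (a :: b :: m))) := by
            rw [Set.inter_eq_self_of_subset_right (relRng_subset_rngSet _ _),
              ← rngSet_cons (α := b :: m) (by simp)]

lemma Wrd_mul_p_rng : ∀ (α : List A), α ∈ G.language →
    Wrd s α * ((p (G.rngSet α) : B) : Unitization ℂ B) = Wrd s α := by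
  intro α
  induction α with
  | nil => intro h; exact absurd rfl (lang_ne_nil h)
  | cons a l ih =>
    intro hlang
    have ha : [a] ∈ G.language := lang_single_of_cons hlang
    have hbase : (↑(s a) : Unitization ℂ B) * ↑(p (G.rngSet [a])) = ↑(s a) := by
      rw [← Unitization.inr_mul, s_mul_p_rng hrep ha]
    cases l with
    | nil => simpa [Wrd_cons, mul_assoc] using hbase
    | cons b m =>
      have hl : (b :: m) ∈ G.language := lang_tail_of_cons (by simp) hlang
      have key : Wrd s (a :: b :: m)
          = Wrd s (a :: b :: m) * ↑(p (G.rngSet (a :: b :: m))) := by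
        calc Wrd s (a :: b :: m) = (↑(s a) * ↑(p (G.rngSet [a]))) * Wrd s (b :: m) := by
              rw [hbase, Wrd_cons]
          _ = ↑(s a) * (↑(p (G.rngSet [a])) * Wrd s (b :: m)) := by rw [mul_assoc]
          _ = ↑(s a) * (Wrd s (b :: m) * ↑(p (G.relRng (G.rngSet [a]) (b :: m)))) := by
              rw [p_mul_Wrd hrep hC _ hl _ (hC.rng_mem [a] ha)]
          _ = Wrd s (a :: b :: m) * ↑(p (G.rngSet (a :: b :: m))) := by
              rw [rngSet_cons (α := b :: m) (by simp)]; simp only [Wrd_cons, mul_assoc]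
      conv_rhs => rw [key]

lemma starWrd_orth : ∀ (β γ : List A), β ∈ G.language → γ ∈ G.language →
    ¬ β <+: γ → ¬ γ <+: β → star (Wrd s β) * Wrd s γ = (0 : Unitization ℂ B) := by
  intro β
  induction β with
  | nil => intro γ _ _ h _; exact absurd (List.nil_prefix) h
  | cons b β' ih =>
    intro γ hβ hγ h1 h2
    cases γ with
    | nil => exact absurd (List.nil_prefix) h2
    | cons c γ' =>
      have hb : [b] ∈ G.language := lang_single_of_cons hβ
      have hc : [c] ∈ G.language := lang_single_of_cons hγ
      by_cases hbc : b = c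
      · subst hbc
        have hβ' : β' ≠ [] := by
          rintro rfl
          exact h1 (by simpa using List.nil_prefix (l := γ'))
        have hγ' : γ' ≠ [] := by
          rintro rfl
          exact h2 (by simpa using List.nil_prefix (l := β'))
        have hβ'l : β' ∈ G.language := lang_tail_of_cons hβ' hβ
        have hγ'l : γ' ∈ G.language := lang_tail_of_cons hγ' hγ
        have hss : ((star (s b) : B) : Unitization ℂ B) * ↑(s b) = ↑(p (G.rngSet [b])) := by
          rw [← Unitization.inr_mul, hrep.star_s_mul_s b hb]
        have hih : star (Wrd s β') * Wrd s γ' = (0 : Unitization ℂ B) := by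
          refine ih γ' hβ'l hγ'l (fun h => h1 ?_) (fun h => h2 ?_)
          · exact List.cons_prefix_cons.mpr ⟨rfl, h⟩
          · exact List.cons_prefix_cons.mpr ⟨rfl, h⟩
        calc star (Wrd s (b :: β')) * Wrd s (b :: γ')
            = star (Wrd s β') * ((↑(star (s b)) : Unitization ℂ B) * ↑(s b) * Wrd s γ') := by
              rw [Wrd_cons, Wrd_cons, star_mul, Unitization.inr_star]
              simp only [mul_assoc]
          _ = star (Wrd s β') * (↑(p (G.rngSet [b])) * Wrd s γ') := by rw [hss]
          _ = star (Wrd s β') * (Wrd s γ' * ↑(p (G.relRng (G.rngSet [b]) γ'))) := by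
              rw [p_mul_Wrd hrep hC _ hγ'l _ (hC.rng_mem [b] hb)]
          _ = (star (Wrd s β') * Wrd s γ') * ↑(p (G.relRng (G.rngSet [b]) γ')) := by
              rw [mul_assoc]
          _ = 0 := by rw [hih, zero_mul]
      · have horth : ((star (s b) : B) : Unitization ℂ B) * ↑(s c) = 0 := by
          rw [← Unitization.inr_mul, hrep.s_orth b c hb hc hbc, Unitization.inr_zero]
        calc star (Wrd s (b :: β')) * Wrd s (c :: γ')
            = star (Wrd s β') * ((↑(star (s b)) : Unitization ℂ B) * ↑(s c) * Wrd s γ') := by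
              rw [Wrd_cons, Wrd_cons, star_mul, Unitization.inr_star]
              simp only [mul_assoc]
          _ = 0 := by rw [horth, zero_mul, mul_zero]

lemma starWrd_prefix {β ε : List A} (hβ : β ∈ G.language) (hβε : β ++ ε ∈ G.language) :
    star (Wrd s β) * Wrd s (β ++ ε)
      = ((p (G.rngSet β) : B) : Unitization ℂ B) * Wrd s ε := by
  rw [Wrd_append, ← mul_assoc, starWrd_mul_Wrd hrep hC β hβ]

end RepLemmas
section GenSection

open LabelledGraph

variable {V E A : Type*} {B : Type*} [NonUnitalCStarAlgebra B]

/-- The admissibility condition on a triple `(α, S, β)`. -/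
def GenWord (G : LabelledGraph V E A) (C : Set (Set V)) (α : List A) (S : Set V)
    (β : List A) : Prop :=
  S ∈ C ∧ (α = [] ∨ (α ∈ G.language ∧ S ⊆ G.rngSet α)) ∧
    (β = [] ∨ (β ∈ G.language ∧ S ⊆ G.rngSet β))

/-- The homogeneous generators of degree `d`. -/
def Gen (G : LabelledGraph V E A) (C : Set (Set V)) (p : Set V → B) (s : A → B)
    (d : ℤ) : Set B :=
  { x | ∃ α S β, GenWord G C α S β ∧ (α.length : ℤ) - β.length = d ∧
      (x : Unitization ℂ B) = Wrd s α * ↑(p S) * star (Wrd s β) }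

variable {G : LabelledGraph V E A} {C : Set (Set V)} {p : Set V → B} {s : A → B}

lemma span_gen_congr {d d' : ℤ} (h : d = d') {x : B}
    (hx : x ∈ Submodule.span ℂ (Gen G C p s d)) :
    x ∈ Submodule.span ℂ (Gen G C p s d') := h ▸ hx

variable (hrep : G.IsRepresentation C p s) (hC : G.Accommodating C)
include hrep

lemma star_coe {α : List A} {S : Set V} {β : List A} {x : B} (hS : S ∈ C)
    (hx : (x : Unitization ℂ B) = Wrd s α * ↑(p S) * star (Wrd s β)) :
    ((star x : B) : Unitization ℂ B) = Wrd s β * ↑(p S) * star (Wrd s α) := by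
  rw [Unitization.inr_star, hx, star_mul, star_star, star_mul, mul_assoc,
    ← Unitization.inr_star, hrep.p_star S hS]

lemma gen_star {d : ℤ} {x : B} (hx : x ∈ Gen G C p s d) : star x ∈ Gen G C p s (-d) := by
  obtain ⟨α, S, β, ⟨hS, hα, hβ⟩, hd, hc⟩ := hx
  exact ⟨β, S, α, ⟨hS, hβ, hα⟩, by omega, star_coe hrep hS hc⟩

lemma span_gen_star {k : ℤ} {w : B} (hw : w ∈ Submodule.span ℂ (Gen G C p s k)) :
    star w ∈ Submodule.span ℂ (Gen G C p s (-k)) := by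
  induction hw using Submodule.span_induction with
  | mem x hx => exact Submodule.subset_span (gen_star hrep hx)
  | zero => rw [star_zero]; exact zero_mem _
  | add x y _ _ hx hy => rw [star_add]; exact add_mem hx hy
  | smul c x _ hx => rw [star_smul]; exact Submodule.smul_mem _ _ hx

include hC

lemma gen_core {α : List A} {S : Set V} {ε : List A} {T : Set V} {δ : List A}
    (hS : S ∈ C) (hT : T ∈ C)
    (hα : α = [] ∨ (α ∈ G.language ∧ S ⊆ G.rngSet α))
    (hε : ε = [] ∨ ε ∈ G.language)
    (hδ : δ = [] ∨ (δ ∈ G.language ∧ T ⊆ G.rngSet δ))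
    {x : B} (hx : (x : Unitization ℂ B)
      = Wrd s α * ↑(p S) * Wrd s ε * ↑(p T) * star (Wrd s δ)) :
    x ∈ Submodule.span ℂ (Gen G C p s ((α.length + ε.length : ℤ) - δ.length)) := by
  have hδ' : δ = [] ∨ (δ ∈ G.language ∧ S ∩ T ⊆ G.rngSet δ) := by
    rcases hδ with h | ⟨h1, h2⟩
    · exact Or.inl h
    · exact Or.inr ⟨h1, Set.inter_subset_right.trans h2⟩
  rcases hε with rfl | hεl
  · -- ε = []
    have h2 : (x : Unitization ℂ B) = Wrd s α * ↑(p (S ∩ T)) * star (Wrd s δ) := by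
      rw [hx, Wrd_nil, mul_one, mul_assoc (Wrd s α), coe_p_inter hrep hS hT]
    refine span_gen_congr (by simp) (Submodule.subset_span ⟨α, S ∩ T, δ,
      ⟨hC.inter_mem S hS T hT, ?_, hδ'⟩, rfl, h2⟩)
    rcases hα with h | ⟨h1, h2⟩
    · exact Or.inl h
    · exact Or.inr ⟨h1, Set.inter_subset_left.trans h2⟩
  · -- ε ∈ language
    have hεC : G.relRng S ε ∈ C := hC.relRng_mem S hS ε hεl
    have hmemC : G.relRng S ε ∩ T ∈ C := hC.inter_mem _ hεC T hT
    have hδ'' : δ = [] ∨ (δ ∈ G.language ∧ G.relRng S ε ∩ T ⊆ G.rngSet δ) := by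
      rcases hδ with h | ⟨h1, h2⟩
      · exact Or.inl h
      · exact Or.inr ⟨h1, Set.inter_subset_right.trans h2⟩
    have h2 : (x : Unitization ℂ B)
        = Wrd s (α ++ ε) * ↑(p (G.relRng S ε ∩ T)) * star (Wrd s δ) := by
      calc (x : Unitization ℂ B)
          = Wrd s α * (↑(p S) * Wrd s ε) * ↑(p T) * star (Wrd s δ) := by
            rw [hx, mul_assoc (Wrd s α)]
        _ = Wrd s α * (Wrd s ε * ↑(p (G.relRng S ε))) * ↑(p T) * star (Wrd s δ) := by
            rw [p_mul_Wrd hrep hC ε hεl S hS]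
        _ = Wrd s (α ++ ε) * (↑(p (G.relRng S ε)) * ↑(p T)) * star (Wrd s δ) := by
            rw [Wrd_append]; simp only [mul_assoc]
        _ = Wrd s (α ++ ε) * ↑(p (G.relRng S ε ∩ T)) * star (Wrd s δ) := by
            rw [coe_p_inter hrep hεC hT]
    by_cases h0 : G.relRng S ε ∩ T = ∅
    · have hz : x = 0 := by
        apply Unitization.inr_injective (R := ℂ)
        rw [h2, h0, hrep.p_empty, Unitization.inr_zero, mul_zero, zero_mul]
      rw [hz]; exact zero_mem _
    · obtain ⟨v, hv⟩ := Set.nonempty_iff_ne_empty.mpr h0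
      rcases hα with rfl | ⟨hαl, hSα⟩
      · simp only [List.nil_append] at h2
        refine span_gen_congr (by simp) (Submodule.subset_span ⟨ε, G.relRng S ε ∩ T, δ,
          ⟨hmemC, Or.inr ⟨hεl, Set.inter_subset_left.trans (relRng_subset_rngSet S ε)⟩,
            hδ''⟩, rfl, h2⟩)
      · have hcc := mem_relRng_concat (relRng_mono hSα ε hv.1)
        refine span_gen_congr ?_ (Submodule.subset_span ⟨α ++ ε, G.relRng S ε ∩ T, δ,
          ⟨hmemC, Or.inr ⟨hcc.1, ?_⟩, hδ''⟩, rfl, h2⟩)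
        · simp [List.length_append]; try ring
        · exact fun w hw => (mem_relRng_concat (relRng_mono hSα ε hw.1)).2

lemma gen_mul_prefix {α : List A} {S : Set V} {β γ : List A} {T : Set V} {δ : List A}
    {x y : B}
    (hxw : GenWord G C α S β) (hyw : GenWord G C γ T δ) (hpre : β <+: γ)
    (hx : (x : Unitization ℂ B) = Wrd s α * ↑(p S) * star (Wrd s β))
    (hy : (y : Unitization ℂ B) = Wrd s γ * ↑(p T) * star (Wrd s δ)) :
    x * y ∈ Submodule.span ℂ
      (Gen G C p s (((α.length : ℤ) - β.length) + ((γ.length : ℤ) - δ.length))) := by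
  obtain ⟨ε, rfl⟩ := hpre
  obtain ⟨hS, hαc, hβc⟩ := hxw
  obtain ⟨hT, hγc, hδc⟩ := hyw
  have hxy : (↑(x * y) : Unitization ℂ B) = ↑x * ↑y := by rw [Unitization.inr_mul]
  rcases hβc with rfl | ⟨hβl, hSβ⟩
  · -- β = []
    simp only [List.nil_append] at hγc hy ⊢
    have hε : ε = [] ∨ ε ∈ G.language := by
      rcases hγc with h | h
      · exact Or.inl h
      · exact Or.inr h.1
    have h : (↑(x * y) : Unitization ℂ B)
        = Wrd s α * ↑(p S) * Wrd s ε * ↑(p T) * star (Wrd s δ) := by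
      rw [hxy, hx, hy, Wrd_nil, star_one, mul_one]
      simp only [mul_assoc]
    exact span_gen_congr (by simp; try ring) (gen_core hrep hC hS hT hαc hε hδc h)
  · -- β ∈ language
    by_cases hε0 : ε = []
    · subst hε0
      simp only [List.append_nil] at hγc hy ⊢
      have h : (↑(x * y) : Unitization ℂ B)
          = Wrd s α * ↑(p S) * Wrd s [] * ↑(p T) * star (Wrd s δ) := by
        calc (↑(x * y) : Unitization ℂ B)
            = Wrd s α * (↑(p S) * (star (Wrd s β) * (Wrd s β * (↑(p T) * star (Wrd s δ))))) := by
              rw [hxy, hx, hy]; simp only [mul_assoc]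
          _ = Wrd s α * (↑(p S) * (↑(p (G.rngSet β)) * (↑(p T) * star (Wrd s δ)))) := by
              rw [← mul_assoc (star (Wrd s β)) (Wrd s β), starWrd_mul_Wrd hrep hC β hβl]
          _ = Wrd s α * ((↑(p S) * ↑(p (G.rngSet β))) * (↑(p T) * star (Wrd s δ))) := by
              rw [← mul_assoc (↑(p S) : Unitization ℂ B) (↑(p (G.rngSet β)))]
          _ = Wrd s α * (↑(p S) * (↑(p T) * star (Wrd s δ))) := by
              rw [coe_p_inter hrep hS (hC.rng_mem β hβl),
                Set.inter_eq_self_of_subset_left hSβ]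
          _ = Wrd s α * ↑(p S) * Wrd s [] * ↑(p T) * star (Wrd s δ) := by
              simp only [Wrd_nil, mul_one, mul_assoc]
      exact span_gen_congr (by simp; try ring) (gen_core hrep hC hS hT hαc (Or.inl rfl) hδc h)
    · -- ε ≠ []
      have hγl : β ++ ε ∈ G.language := by
        rcases hγc with h | h
        · exact absurd h (by simp [hε0])
        · exact h.1
      have hεl : ε ∈ G.language := lang_of_append_right hε0 hγl
      have h : (↑(x * y) : Unitization ℂ B)
          = Wrd s α * ↑(p S) * Wrd s ε * ↑(p T) * star (Wrd s δ) := by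
        calc (↑(x * y) : Unitization ℂ B)
            = Wrd s α * (↑(p S) * (star (Wrd s β) * (Wrd s (β ++ ε) * (↑(p T) * star (Wrd s δ))))) := by
              rw [hxy, hx, hy]; simp only [mul_assoc]
          _ = Wrd s α * (↑(p S) * ((↑(p (G.rngSet β)) * Wrd s ε) * (↑(p T) * star (Wrd s δ)))) := by
              rw [← mul_assoc (star (Wrd s β)) (Wrd s (β ++ ε)),
                starWrd_prefix hrep hC hβl hγl]
          _ = Wrd s α * ((↑(p S) * ↑(p (G.rngSet β))) * (Wrd s ε * (↑(p T) * star (Wrd s δ)))) := by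
              simp only [mul_assoc]
          _ = Wrd s α * (↑(p S) * (Wrd s ε * (↑(p T) * star (Wrd s δ)))) := by
              rw [coe_p_inter hrep hS (hC.rng_mem β hβl),
                Set.inter_eq_self_of_subset_left hSβ]
          _ = Wrd s α * ↑(p S) * Wrd s ε * ↑(p T) * star (Wrd s δ) := by
              simp only [mul_assoc]
      exact span_gen_congr (by simp [List.length_append]; try ring)
        (gen_core hrep hC hS hT hαc (Or.inr hεl) hδc h)

lemma gen_mul {d e : ℤ} {x y : B} (hx : x ∈ Gen G C p s d) (hy : y ∈ Gen G C p s e) :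
    x * y ∈ Submodule.span ℂ (Gen G C p s (d + e)) := by
  obtain ⟨α, S, β, hxw, hdx, hcx⟩ := hx
  obtain ⟨γ, T, δ, hyw, hdy, hcy⟩ := hy
  by_cases h1 : β <+: γ
  · exact span_gen_congr (by omega) (gen_mul_prefix hrep hC hxw hyw h1 hcx hcy)
  by_cases h2 : γ <+: β
  · have hsx := star_coe hrep hxw.1 hcx
    have hsy := star_coe hrep hyw.1 hcy
    have hw1 : GenWord G C δ T γ := ⟨hyw.1, hyw.2.2, hyw.2.1⟩
    have hw2 : GenWord G C β S α := ⟨hxw.1, hxw.2.2, hxw.2.1⟩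
    have hk := gen_mul_prefix hrep hC hw1 hw2 h2 hsy hsx
    have hst := span_gen_star hrep hk
    rw [star_mul, star_star, star_star] at hst
    exact span_gen_congr (by omega) hst
  · have hβ0 : β ≠ [] := fun h => h1 (h ▸ List.nil_prefix)
    have hγ0 : γ ≠ [] := fun h => h2 (h ▸ List.nil_prefix)
    have hβl : β ∈ G.language := by
      rcases hxw.2.2 with h | h
      · exact absurd h hβ0
      · exact h.1
    have hγl : γ ∈ G.language := by
      rcases hyw.2.1 with h | h
      · exact absurd h hγ0
      · exact h.1
    have hz : x * y = 0 := by
      apply Unitization.inr_injective (R := ℂ)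
      rw [Unitization.inr_mul, hcx, hcy, Unitization.inr_zero]
      simp only [mul_assoc]
      rw [← mul_assoc (star (Wrd s β)) (Wrd s γ), starWrd_orth hrep hC β γ hβl hγl h1 h2]
      simp
    rw [hz]; exact zero_mem _

end GenSection
section GaugeSection

open LabelledGraph Real MeasureTheory

variable {V E A : Type*} {B : Type*} [NonUnitalCStarAlgebra B]
variable {G : LabelledGraph V E A} {C : Set (Set V)} {p : Set V → B} {s : A → B}

namespace CircleAction

variable (γc : CircleAction B)

lemma act_zero (z : Circle) : γc.act z 0 = 0 := by
  simpa using γc.map_smul z 0 0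

lemma act_sub (z : Circle) (x y : B) : γc.act z (x - y) = γc.act z x - γc.act z y := by
  have hneg : γc.act z (-y) = -(γc.act z y) := by
    simpa using γc.map_smul z (-1 : ℂ) y
  rw [sub_eq_add_neg, γc.map_add, hneg, sub_eq_add_neg]

/-- The action as a non-unital star algebra homomorphism. -/
noncomputable def hom (z : Circle) : B →⋆ₙₐ[ℂ] B where
  toFun := γc.act z
  map_smul' := γc.map_smul z
  map_zero' := γc.act_zero z
  map_add' := γc.map_add z
  map_mul' := γc.map_mul z
  map_star' := γc.map_star z

lemma act_norm_le (z : Circle) (x : B) : ‖γc.act z x‖ ≤ ‖x‖ :=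
  NonUnitalStarAlgHom.norm_apply_le (γc.hom z) x

lemma continuous_act (z : Circle) : Continuous (γc.act z) := by
  have h : LipschitzWith 1 (γc.act z) := by
    apply LipschitzWith.of_dist_le_mul
    intro x y
    rw [dist_eq_norm, dist_eq_norm, ← γc.act_sub z, NNReal.coe_one, one_mul]
    exact γc.act_norm_le z (x - y)
  exact h.continuous

/-- Averaging over the circle action. -/
noncomputable def avg (b : B) : B :=
  (2 * π)⁻¹ • ∫ t in (0:ℝ)..(2 * π), γc.act (Circle.exp t) b

lemma integrand_continuous (b : B) : Continuous fun t : ℝ => γc.act (Circle.exp t) b :=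
  (γc.continuous b).comp Circle.exp.continuous

lemma avg_const {b : B} (hb : ∀ z, γc.act z b = b) : γc.avg b = b := by
  unfold avg
  simp only [hb]
  rw [intervalIntegral.integral_const, sub_zero, smul_smul,
    inv_mul_cancel₀ (ne_of_gt Real.two_pi_pos), one_smul]

lemma avg_zero : γc.avg 0 = 0 :=
  γc.avg_const (γc.act_zero)

lemma avg_add (x y : B) : γc.avg (x + y) = γc.avg x + γc.avg y := by
  unfold avg
  rw [← smul_add, ← intervalIntegral.integral_add
    ((γc.integrand_continuous x).intervalIntegrable _ _)
    ((γc.integrand_continuous y).intervalIntegrable _ _)]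
  simp only [γc.map_add]

lemma avg_smul (c : ℂ) (x : B) : γc.avg (c • x) = c • γc.avg x := by
  unfold avg
  simp only [γc.map_smul]
  rw [intervalIntegral.integral_smul, smul_comm]

lemma avg_norm_le (b : B) : ‖γc.avg b‖ ≤ ‖b‖ := by
  unfold avg
  rw [norm_smul, Real.norm_eq_abs, abs_of_pos (by positivity)]
  calc (2 * π)⁻¹ * ‖∫ t in (0:ℝ)..(2 * π), γc.act (Circle.exp t) b‖
      ≤ (2 * π)⁻¹ * (‖b‖ * |2 * π - 0|) := by
        refine mul_le_mul_of_nonneg_left ?_ (by positivity)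
        exact intervalIntegral.norm_integral_le_of_norm_le_const
          (fun t _ => γc.act_norm_le _ b)
    _ = ‖b‖ := by
        rw [sub_zero, abs_of_pos Real.two_pi_pos, mul_comm ‖b‖, ← mul_assoc,
          inv_mul_cancel₀ (ne_of_gt Real.two_pi_pos), one_mul]

lemma avg_sub (x y : B) : γc.avg (x - y) = γc.avg x - γc.avg y := by
  unfold avg
  rw [← smul_sub, ← intervalIntegral.integral_sub
    ((γc.integrand_continuous x).intervalIntegrable _ _)
    ((γc.integrand_continuous y).intervalIntegrable _ _)]
  simp only [γc.act_sub]

lemma avg_continuous : Continuous γc.avg := by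
  have h : LipschitzWith 1 γc.avg := by
    apply LipschitzWith.of_dist_le_mul
    intro x y
    rw [dist_eq_norm, dist_eq_norm, ← γc.avg_sub, NNReal.coe_one, one_mul]
    exact γc.avg_norm_le (x - y)
  exact h.continuous

lemma avg_homogeneous {d : ℤ} (hd : d ≠ 0) {x : B}
    (hx : ∀ z : Circle, γc.act z x = ((z : ℂ) ^ d) • x) : γc.avg x = 0 := by
  unfold avg
  have h1 : ∀ t : ℝ, γc.act (Circle.exp t) x
      = Complex.exp ((d * Complex.I) * t) • x := by
    intro t
    rw [hx (Circle.exp t)]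
    congr 1
    rw [Circle.coe_exp, ← Complex.exp_int_mul]
    congr 1
    ring
  simp only [h1]
  rw [intervalIntegral.integral_smul_const]
  have hc : (d : ℂ) * Complex.I ≠ 0 :=
    mul_ne_zero (Int.cast_ne_zero.mpr hd) Complex.I_ne_zero
  rw [integral_exp_mul_complex hc]
  have h2 : Complex.exp ((d * Complex.I) * ((2 * π : ℝ) : ℂ)) = 1 := by
    rw [show (d : ℂ) * Complex.I * ((2 * π : ℝ) : ℂ) = (d : ℂ) * (2 * (π : ℂ) * Complex.I) by
      push_cast; ring]
    exact_mod_cast Complex.exp_int_mul_two_pi_mul_I d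
  rw [show ((d : ℂ) * Complex.I) * ((0:ℝ) : ℂ) = 0 by push_cast; ring, Complex.exp_zero]
  rw [h2]
  simp

end CircleAction

variable {γc : CircleAction B}

lemma act_sWord (hγ : IsGaugeAction G C p s γc) :
    ∀ (α : List A), α ∈ G.language → ∀ z : Circle,
      γc.act z (sWord s α) = ((z : ℂ) ^ α.length) • sWord s α := by
  intro α
  induction α with
  | nil => intro h; exact absurd rfl (lang_ne_nil h)
  | cons a l ih =>
    intro hlang z
    have ha : [a] ∈ G.language := lang_single_of_cons hlang
    cases l with
    | nil => simpa [sWord] using hγ.1 z a ha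
    | cons b m =>
      have hl : (b :: m) ∈ G.language := lang_tail_of_cons (by simp) hlang
      rw [show sWord s (a :: b :: m) = s a * sWord s (b :: m) from rfl,
        γc.map_mul, hγ.1 z a ha, ih hl z, smul_mul_smul_comm]
      congr 1
      simp only [List.length_cons, pow_succ]
      ring

lemma conj_coe_pow (z : Circle) (n : ℕ) :
    star ((z : ℂ) ^ n) = (z : ℂ) ^ (-(n : ℤ)) := by
  rw [star_pow, Complex.star_def, ← Circle.coe_inv_eq_conj, Circle.coe_inv, zpow_neg,
    zpow_natCast, inv_pow]

lemma act_gen (hrep : G.IsRepresentation C p s) (hγ : IsGaugeAction G C p s γc)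
    {d : ℤ} {x : B} (hx : x ∈ Gen G C p s d) (z : Circle) :
    γc.act z x = ((z : ℂ) ^ d) • x := by
  obtain ⟨α, S, β, ⟨hS, hαc, hβc⟩, hd, hc⟩ := hx
  rcases hαc with rfl | ⟨hαl, hSα⟩
  · rcases hβc with rfl | ⟨hβl, hSβ⟩
    · -- x = p S
      have hx' : x = p S := by
        apply Unitization.inr_injective (R := ℂ)
        simpa using hc
      have hd0 : d = 0 := by simpa using hd.symm
      rw [hx', hγ.2 z S hS, hd0, zpow_zero, one_smul]
    · -- x = p S * star (sWord s β)
      have hβ0 : β ≠ [] := lang_ne_nil hβl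
      have hx' : x = p S * star (sWord s β) := by
        apply Unitization.inr_injective (R := ℂ)
        rw [Unitization.inr_mul, Unitization.inr_star, coe_sWord hβ0]
        simpa using hc
      have hd' : d = -(β.length : ℤ) := by simpa using hd.symm
      rw [hx', γc.map_mul, hγ.2 z S hS, γc.map_star, act_sWord hγ β hβl z, star_smul,
        conj_coe_pow, mul_smul_comm, hd']
  · rcases hβc with rfl | ⟨hβl, hSβ⟩
    · -- x = sWord s α * p S
      have hα0 : α ≠ [] := lang_ne_nil hαl
      have hx' : x = sWord s α * p S := by
        apply Unitization.inr_injective (R := ℂ)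
        rw [Unitization.inr_mul, coe_sWord hα0]
        simpa using hc
      have hd' : d = (α.length : ℤ) := by simpa using hd.symm
      rw [hx', γc.map_mul, hγ.2 z S hS, act_sWord hγ α hαl z, smul_mul_assoc, hd',
        zpow_natCast]
    · -- x = sWord s α * p S * star (sWord s β)
      have hα0 : α ≠ [] := lang_ne_nil hαl
      have hβ0 : β ≠ [] := lang_ne_nil hβl
      have hx' : x = sWord s α * p S * star (sWord s β) := by
        apply Unitization.inr_injective (R := ℂ)
        rw [Unitization.inr_mul, Unitization.inr_mul, Unitization.inr_star,
          coe_sWord hα0, coe_sWord hβ0]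
        exact hc
      rw [hx', γc.map_mul, γc.map_mul, hγ.2 z S hS, act_sWord hγ α hαl z,
        γc.map_star, act_sWord hγ β hβl z, star_smul, conj_coe_pow,
        smul_mul_assoc, smul_mul_assoc, mul_smul_comm, smul_smul]
      rw [← zpow_natCast (z : ℂ) α.length, ← zpow_add₀ z.coe_ne_zero,
        show (α.length : ℤ) + -(β.length : ℤ) = d from by omega]

end GaugeSection
theorem gauge_fixedPointAlgebra {V E A : Type*} [Countable V] [Countable E]
    {B : Type*} [NonUnitalCStarAlgebra B]
    (G : LabelledGraph V E A) (C : Set (Set V))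
    (hC : G.Accommodating C) (hwlr : G.WeaklyLeftResolving C)
    (p : Set V → B) (s : A → B) (hrep : G.IsRepresentation C p s)
    (hgen : genCStar B ({ x | ∃ a, [a] ∈ G.language ∧ x = s a } ∪
              { x | ∃ S ∈ C, x = p S }) = Set.univ)
    (γ : CircleAction B) (hγ : IsGaugeAction G C p s γ) :
    { b : B | ∀ z : Circle, γ.act z b = b } =
      closure (Submodule.span ℂ
        ({ x | ∃ S ∈ C, x = p S } ∪
         { x | ∃ n : ℕ, 1 ≤ n ∧ ∃ α ∈ G.language, ∃ β ∈ G.language,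
             α.length = n ∧ β.length = n ∧ ∃ S ∈ C,
             S ⊆ G.rngSet α ∩ G.rngSet β ∧
             x = sWord s α * p S * star (sWord s β) }) : Set B) := by
  classical
  open LabelledGraph in
  set RHSset : Set B := { x | ∃ S ∈ C, x = p S } ∪
         { x | ∃ n : ℕ, 1 ≤ n ∧ ∃ α ∈ G.language, ∃ β ∈ G.language,
             α.length = n ∧ β.length = n ∧ ∃ S ∈ C,
             S ⊆ G.rngSet α ∩ G.rngSet β ∧
             x = sWord s α * p S * star (sWord s β) } with hRHSdef
  have h_rhs_gen : RHSset ⊆ Gen G C p s 0 := by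
    rintro x (⟨S, hS, rfl⟩ | ⟨n, hn, α, hαl, β, hβl, hlα, hlβ, S, hS, hsub, rfl⟩)
    · exact ⟨[], S, [], ⟨hS, Or.inl rfl, Or.inl rfl⟩, by simp, by simp⟩
    · refine ⟨α, S, β, ⟨hS, Or.inr ⟨hαl, hsub.trans Set.inter_subset_left⟩,
        Or.inr ⟨hβl, hsub.trans Set.inter_subset_right⟩⟩, by omega, ?_⟩
      rw [Unitization.inr_mul, Unitization.inr_mul, Unitization.inr_star,
        coe_sWord (LabelledGraph.lang_ne_nil hαl),
        coe_sWord (LabelledGraph.lang_ne_nil hβl)]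
  have h_gen_rhs : Gen G C p s 0 ⊆ RHSset := by
    rintro x ⟨α, S, β, ⟨hS, hαc, hβc⟩, hd, hc⟩
    rcases hαc with rfl | ⟨hαl, hSα⟩
    · have hβnil : β = [] := by simpa using hd
      subst hβnil
      exact Or.inl ⟨S, hS, Unitization.inr_injective (R := ℂ) (by simpa using hc)⟩
    · rcases hβc with rfl | ⟨hβl, hSβ⟩
      · exfalso
        have : α = [] := by simpa using hd
        exact LabelledGraph.lang_ne_nil hαl this
      · have hα0 := LabelledGraph.lang_ne_nil hαl
        have hβ0 := LabelledGraph.lang_ne_nil hβl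
        refine Or.inr ⟨α.length, List.length_pos_iff.mpr hα0, α, hαl, β, hβl, rfl, by omega,
          S, hS, Set.subset_inter hSα hSβ, ?_⟩
        apply Unitization.inr_injective (R := ℂ)
        rw [Unitization.inr_mul, Unitization.inr_mul, Unitization.inr_star,
          coe_sWord hα0, coe_sWord hβ0]
        exact hc
  have hFclosed : IsClosed { b : B | ∀ z : Circle, γ.act z b = b } := by
    have heq : { b : B | ∀ z : Circle, γ.act z b = b }
        = ⋂ z : Circle, { b | γ.act z b = b } := by
      ext b; simp [Set.mem_iInter]
    rw [heq]
    exact isClosed_iInter fun z => isClosed_eq (γ.continuous_act z) continuous_id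
  apply Set.Subset.antisymm
  · -- fixed points ⊆ closure of the span
    intro b hb
    have hbB : b ∈ genCStar B ({ x | ∃ a, [a] ∈ G.language ∧ x = s a } ∪
        { x | ∃ S ∈ C, x = p S }) := by rw [hgen]; trivial
    set D : Submodule ℂ B := Submodule.span ℂ (⋃ d : ℤ, Gen G C p s d) with hD
    have hgenD : ∀ (d : ℤ) (x : B), x ∈ Gen G C p s d → x ∈ D := fun d x hx =>
      Submodule.subset_span (Set.mem_iUnion.mpr ⟨d, hx⟩)
    have hmulD : ∀ x ∈ D, ∀ y ∈ D, x * y ∈ D := by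
      intro x hx
      induction hx using Submodule.span_induction with
      | mem u hu =>
        intro y hy
        induction hy using Submodule.span_induction with
        | mem v hv =>
          obtain ⟨d, hd⟩ := Set.mem_iUnion.mp hu
          obtain ⟨e, he⟩ := Set.mem_iUnion.mp hv
          exact Submodule.span_le.mpr (fun w hw => hgenD _ w hw) (gen_mul hrep hC hd he)
        | zero => rw [mul_zero]; exact zero_mem _
        | add v w _ _ h1 h2 => rw [mul_add]; exact add_mem h1 h2
        | smul c v _ h => rw [mul_smul_comm]; exact Submodule.smul_mem _ _ h
      | zero => intro y _; rw [zero_mul]; exact zero_mem _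
      | add u w _ _ h1 h2 => intro y hy; rw [add_mul]; exact add_mem (h1 y hy) (h2 y hy)
      | smul c u _ h => intro y hy; rw [smul_mul_assoc]; exact Submodule.smul_mem _ _ (h y hy)
    have hstarD : ∀ x ∈ D, star x ∈ D := by
      intro x hx
      induction hx using Submodule.span_induction with
      | mem u hu =>
        obtain ⟨d, hd⟩ := Set.mem_iUnion.mp hu
        exact hgenD _ _ (gen_star hrep hd)
      | zero => rw [star_zero]; exact zero_mem _
      | add u w _ _ h1 h2 => rw [star_add]; exact add_mem h1 h2
      | smul c u _ h => rw [star_smul]; exact Submodule.smul_mem _ _ h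
    have hadjD : (NonUnitalStarAlgebra.adjoin ℂ ({ x | ∃ a, [a] ∈ G.language ∧ x = s a } ∪
        { x | ∃ S ∈ C, x = p S }) : Set B) ⊆ (D : Set B) := by
      intro x hx
      induction hx using NonUnitalStarAlgebra.adjoin_induction with
      | mem u hu =>
        rcases hu with ⟨a, ha, rfl⟩ | ⟨S, hS, rfl⟩
        · refine hgenD 1 _ ⟨[a], G.rngSet [a], [], ⟨hC.rng_mem [a] ha,
            Or.inr ⟨ha, subset_rfl⟩, Or.inl rfl⟩, by simp, ?_⟩
          simp only [Wrd_cons, Wrd_nil, mul_one, star_one]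
          rw [← Unitization.inr_mul, s_mul_p_rng hrep ha]
        · exact hgenD 0 _ ⟨[], S, [], ⟨hS, Or.inl rfl, Or.inl rfl⟩, by simp, by simp⟩
      | add x y _ _ h1 h2 => exact add_mem h1 h2
      | zero => exact zero_mem _
      | mul x y _ _ h1 h2 => exact hmulD x h1 y h2
      | smul c x _ h => exact Submodule.smul_mem _ _ h
      | star x _ h => exact hstarD x h
    have hNmem : ∀ x ∈ D, γ.avg x ∈ (Submodule.span ℂ RHSset).topologicalClosure := by
      intro x hx
      induction hx using Submodule.span_induction with
      | mem u hu =>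
        obtain ⟨d, hd⟩ := Set.mem_iUnion.mp hu
        by_cases h0 : d = 0
        · subst h0
          have havg : γ.avg u = u := γ.avg_const
            (fun z => by rw [act_gen hrep hγ hd z, zpow_zero, one_smul])
          rw [havg]
          exact Submodule.le_topologicalClosure _ (Submodule.subset_span (h_gen_rhs hd))
        · rw [γ.avg_homogeneous h0 (fun z => act_gen hrep hγ hd z)]
          exact zero_mem _
      | zero => rw [γ.avg_zero]; exact zero_mem _
      | add u w _ _ h1 h2 => rw [γ.avg_add]; exact add_mem h1 h2
      | smul c u _ h => rw [γ.avg_smul]; exact Submodule.smul_mem _ _ h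
    have himg : γ.avg b ∈ closure (γ.avg '' (NonUnitalStarAlgebra.adjoin ℂ
        ({ x | ∃ a, [a] ∈ G.language ∧ x = s a } ∪ { x | ∃ S ∈ C, x = p S }) : Set B)) :=
      image_closure_subset_closure_image γ.avg_continuous ⟨b, hbB, rfl⟩
    have hcl : γ.avg b ∈ ((Submodule.span ℂ RHSset).topologicalClosure : Set B) := by
      refine closure_minimal ?_ (Submodule.isClosed_topologicalClosure _) himg
      rintro w ⟨x, hx, rfl⟩
      exact hNmem x (hadjD hx)
    rw [γ.avg_const hb] at hcl
    exact hcl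
  · -- closure of the span ⊆ fixed points
    have hspanF : (Submodule.span ℂ RHSset : Set B)
        ⊆ { b : B | ∀ z : Circle, γ.act z b = b } := by
      intro x hx z
      induction hx using Submodule.span_induction with
      | mem u hu => rw [act_gen hrep hγ (h_rhs_gen hu) z, zpow_zero, one_smul]
      | zero => exact γ.act_zero z
      | add u w _ _ h1 h2 => rw [γ.map_add, h1, h2]
      | smul c u _ h => rw [γ.map_smul, h]
    exact closure_minimal hspanF hFclosed
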